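/- arXiv:2012.01967 — 4 statements merged into one kernel-verified Lean document; each statement's English description precedes it below -/
import Mathlib

section
/- Let A and B be persistence diagrams with A ⊆ B and let A' be a natural reweighting of A with respect to B. The transportation plan T that sends each off-diagonal point b of B (with multiplicity) to its fixed nearest point NN(b) in flat(A) ∪ Δ minimizes the p-cost among all transportation plans from B to A', simultaneously for every p with 1 ≤ p < ∞ and for p = ∞. -/
open Metric

/-- The diagonal in the plane. -/
def diag : Set (ℝ × ℝ) := {p | p.1 = p.2}

/-- A persistence diagram: a finite multiset of points strictly above the diagonal
(the diagonal itself, with infinite multiplicity, is implicit). -/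
structure PD where
  pts : Multiset (ℝ × ℝ)
  above : ∀ p ∈ pts, p.1 < p.2

/-- The set of distinct off-diagonal points of a persistence diagram. -/
def PD.flat (A : PD) : Set (ℝ × ℝ) := {p | p ∈ A.pts}

/-- A (partial, multiplicity-aware) matching between persistence diagrams. -/
structure PDMatching (A B : PD) where
  pairs : Multiset ((ℝ × ℝ) × (ℝ × ℝ))
  subA : pairs.map Prod.fst ≤ A.pts
  subB : pairs.map Prod.snd ≤ B.pts

/-- Bottleneck cost of a matching: max over matched pairs of their distance, and over
unmatched off-diagonal points of their distance to the diagonal. -/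
noncomputable def PDMatching.cost {A B : PD} (M : PDMatching A B) : ℝ :=
  ((M.pairs.map fun pq => dist pq.1 pq.2) +
      (((A.pts - M.pairs.map Prod.fst) + (B.pts - M.pairs.map Prod.snd)).map
        fun q => infDist q diag)).fold max 0

/-- Bottleneck distance between persistence diagrams. -/
noncomputable def bottleneckDist (A B : PD) : ℝ :=
  sInf {c | ∃ M : PDMatching A B, M.cost = c}

/-- `q` is a nearest point to `b` in the set `S`. -/
def isNearest (S : Set (ℝ × ℝ)) (b q : ℝ × ℝ) : Prop :=
  q ∈ S ∧ ∀ r ∈ S, dist b q ≤ dist b r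

/-- The natural reweighting determined by a nearest-point assignment `NN`:
each point `a` gets multiplicity equal to the number of points `b` of `B`
(with multiplicity) with `NN b = a`; mass sent to the diagonal is dropped. -/
noncomputable def naturalReweighting (B : PD) (NN : ℝ × ℝ → ℝ × ℝ) : PD where
  pts := (B.pts.map NN).filter fun q => q.1 < q.2
  above := fun p hp => (Multiset.mem_filter.mp hp).2

/-- A transportation plan from `B` to `A'`: each off-diagonal point of `B`
(with multiplicity) gets a target in `flat A' ∪ Δ`, and every `a ∈ flat A'`
receives exactly `mult_{A'}(a)` points. -/
structure TransportPlan (B A' : PD) where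
  pairs : Multiset ((ℝ × ℝ) × (ℝ × ℝ))
  source_eq : pairs.map Prod.fst = B.pts
  target_mem : ∀ pq ∈ pairs, pq.2 ∈ A'.flat ∪ diag
  target_count : ∀ a ∈ A'.pts, (pairs.map Prod.snd).count a = A'.pts.count a

/-- Cost of moving `pq.1` to `pq.2`: distance to the diagonal if the target is
on the diagonal, otherwise the ℓ∞ distance. -/
noncomputable def pairCost (pq : (ℝ × ℝ) × (ℝ × ℝ)) : ℝ :=
  if pq.2.1 = pq.2.2 then infDist pq.1 diag else dist pq.1 pq.2

/-- The `p`-cost of a transportation plan, for `1 ≤ p < ∞`. -/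
noncomputable def TransportPlan.pCost {B A' : PD} (T : TransportPlan B A') (p : ℝ) : ℝ :=
  ((T.pairs.map fun pq => pairCost pq ^ p).sum) ^ (1 / p)

/-- The `∞`-cost (bottleneck cost) of a transportation plan. -/
noncomputable def TransportPlan.supCost {B A' : PD} (T : TransportPlan B A') : ℝ :=
  (T.pairs.map pairCost).fold max 0

lemma my_fold_max_le {α : Type*} (s : Multiset α) (f g : α → ℝ)
    (h : ∀ x ∈ s, f x ≤ g x) :
    (s.map f).fold max 0 ≤ (s.map g).fold max 0 := by
  induction s using Multiset.induction with
  | empty => simp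
  | cons a s ih =>
    simp only [Multiset.map_cons, Multiset.fold_cons_left]
    exact max_le_max (h a (Multiset.mem_cons_self a s))
      (ih fun x hx => h x (Multiset.mem_cons_of_mem hx))

lemma my_sum_map_le {α : Type*} (s : Multiset α) (f g : α → ℝ)
    (h : ∀ x ∈ s, f x ≤ g x) :
    (s.map f).sum ≤ (s.map g).sum := by
  induction s using Multiset.induction with
  | empty => simp
  | cons a s ih =>
    simp only [Multiset.map_cons, Multiset.sum_cons]
    exact add_le_add (h a (Multiset.mem_cons_self a s))
      (ih fun x hx => h x (Multiset.mem_cons_of_mem hx))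

lemma pairCost_nonneg (pq : (ℝ × ℝ) × (ℝ × ℝ)) : 0 ≤ pairCost pq := by
  unfold pairCost
  split
  · exact infDist_nonneg
  · exact dist_nonneg

/-- The transportation plan sending each off-diagonal point `b` of `B` to its fixed
nearest point `NN b` in `flat A ∪ Δ` minimizes the `p`-cost among all transportation
plans from `B` to the natural reweighting `A'`, simultaneously for all `1 ≤ p < ∞`
and for `p = ∞`. -/
theorem nearest_neighbor_plan_optimal
    (A B : PD) (hAB : A.pts ≤ B.pts) (NN : ℝ × ℝ → ℝ × ℝ)
    (hNN : ∀ b ∈ B.pts, isNearest (A.flat ∪ diag) b (NN b))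
    (T₀ : TransportPlan B (naturalReweighting B NN))
    (hT₀ : T₀.pairs = B.pts.map fun b => (b, NN b)) :
    (∀ p : ℝ, 1 ≤ p → ∀ T : TransportPlan B (naturalReweighting B NN),
        T₀.pCost p ≤ T.pCost p) ∧
    (∀ T : TransportPlan B (naturalReweighting B NN), T₀.supCost ≤ T.supCost) := by
  have hdne : diag.Nonempty := ⟨(0, 0), rfl⟩
  have key : ∀ b ∈ B.pts, ∀ q ∈ A.flat ∪ diag,
      pairCost (b, NN b) ≤ pairCost (b, q) := by
    intro b hb q hq
    obtain ⟨hmem, hmin⟩ := hNN b hb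
    by_cases hq2 : q.1 = q.2
    · by_cases hn : (NN b).1 = (NN b).2
      · simp [pairCost, hn, hq2]
      · simp only [pairCost, hn, hq2, if_true, if_false]
        by_contra hlt
        push_neg at hlt
        obtain ⟨y, hy, hylt⟩ := (infDist_lt_iff hdne).1 hlt
        exact absurd (hmin y (Or.inr hy)) (not_le.2 hylt)
    · have hqA : q ∈ A.flat := hq.resolve_right hq2
      by_cases hn : (NN b).1 = (NN b).2
      · simp only [pairCost, hn, hq2, if_true, if_false]
        calc infDist b diag ≤ dist b (NN b) :=
              infDist_le_dist_of_mem (show NN b ∈ diag from hn)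
          _ ≤ dist b q := hmin q (Or.inl hqA)
      · simp only [pairCost, hn, hq2, if_false]
        exact hmin q (Or.inl hqA)
  have keyT : ∀ T : TransportPlan B (naturalReweighting B NN), ∀ pq ∈ T.pairs,
      pairCost (pq.1, NN pq.1) ≤ pairCost pq := by
    intro T pq hpq
    have hb : pq.1 ∈ B.pts := by
      rw [← T.source_eq]
      exact Multiset.mem_map_of_mem Prod.fst hpq
    have hq : pq.2 ∈ A.flat ∪ diag := by
      rcases T.target_mem pq hpq with h | h
      · obtain ⟨b', hb', hb'eq⟩ := Multiset.mem_map.mp (Multiset.mem_of_mem_filter h)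
        rw [← hb'eq]
        exact (hNN b' hb').1
      · exact Or.inr h
    exact key pq.1 hb pq.2 hq
  have hmapT₀ : ∀ f : ((ℝ × ℝ) × (ℝ × ℝ)) → ℝ,
      T₀.pairs.map f = B.pts.map fun b => f (b, NN b) := by
    intro f; rw [hT₀, Multiset.map_map]; rfl
  have hmapT : ∀ T : TransportPlan B (naturalReweighting B NN),
      ∀ f : ((ℝ × ℝ) × (ℝ × ℝ)) → ℝ,
      T.pairs.map (fun pq => f (pq.1, NN pq.1)) = B.pts.map fun b => f (b, NN b) := by
    intro T f; rw [← T.source_eq, Multiset.map_map]; rfl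
  constructor
  · intro p hp T
    unfold TransportPlan.pCost
    have h1 : (T₀.pairs.map fun pq => pairCost pq ^ p).sum
        ≤ (T.pairs.map fun pq => pairCost pq ^ p).sum := by
      rw [hmapT₀ (fun pq => pairCost pq ^ p),
        ← hmapT T (fun pq => pairCost pq ^ p)]
      refine my_sum_map_le _ _ _ fun pq hpq => ?_
      exact Real.rpow_le_rpow (pairCost_nonneg _) (keyT T pq hpq) (by linarith)
    refine Real.rpow_le_rpow ?_ h1 (by positivity)
    refine Multiset.sum_nonneg fun x hx => ?_
    obtain ⟨pq, _, rfl⟩ := Multiset.mem_map.mp hx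
    exact Real.rpow_nonneg (pairCost_nonneg _) _
  · intro T
    unfold TransportPlan.supCost
    rw [hmapT₀ pairCost, ← hmapT T pairCost]
    exact my_fold_max_le _ _ _ (keyT T)
end

section
/- Let D be a persistence diagram with n distinct off-diagonal points and let (D₀,…,D_n) be a greedy PD sketch of D. Then for every i and every persistence diagram E with at most i distinct off-diagonal points, d_B(D, D_i) ≤ 2·d_B(D, E). In particular, D_i is a 2-approximation to the closest persistence diagram to D having i distinct off-diagonal points. -/
open Metric

/-- The set `{p_j : j < i}` of the first `i` points of an ordering. -/
def prefixSet {n : ℕ} (p : Fin n → ℝ × ℝ) (i : ℕ) : Set (ℝ × ℝ) :=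
  {x | ∃ j : Fin n, (j : ℕ) < i ∧ p j = x}

/-- A greedy ordering of the distinct off-diagonal points of a persistence diagram `D`,
together with, for each prefix, a fixed nearest-point assignment used to form the
natural reweightings.  `S_i = prefixSet p i ∪ Δ`. -/
structure GreedySketch (D : PD) (n : ℕ) where
  p : Fin n → ℝ × ℝ
  inj : Function.Injective p
  range_eq : Set.range p = D.flat
  greedy : ∀ i : Fin n,
    infDist (p i) (prefixSet p i ∪ diag) =
      hausdorffDist (prefixSet p i ∪ diag) (D.flat ∪ diag)
  NN : ℕ → ℝ × ℝ → ℝ × ℝ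
  NN_nearest : ∀ i ≤ n, ∀ b ∈ D.pts, isNearest (prefixSet p i ∪ diag) b (NN i b)

/-- The `i`-th diagram `D_i` of the greedy PD sketch: the natural reweighting, with
respect to `D`, of the `i`-th prefix. -/
noncomputable def GreedySketch.approx {D : PD} {n : ℕ} (G : GreedySketch D n) (i : ℕ) : PD :=
  naturalReweighting D (G.NN i)

/-- The `i`-th insertion radius `ε_i = d_H(S_i, flat D ∪ Δ)`. -/
noncomputable def GreedySketch.eps {D : PD} {n : ℕ} (G : GreedySketch D n) (i : ℕ) : ℝ :=
  hausdorffDist (prefixSet G.p i ∪ diag) (D.flat ∪ diag)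


/-!
Matching every point of `D` to its chosen nearest point of `S_i = {p₀, …, p_{i-1}} ∪ Δ` gives
`d_B(D, D_i) ≤ ε_i`. Conversely, greediness and the monotonicity of the insertion radii make
`p₀, …, p_i` pairwise `ε_i`-separated and `ε_i`-far from the diagonal. A matching of cost below
`ε_i / 2` with a diagram having at most `i` distinct points must then match all of them, two to
the same point, contradicting the triangle inequality. Hence `ε_i ≤ 2 d_B(D, E)`.
-/

theorem Multiset.fold_max_le_iff {α : Type*} [LinearOrder α] {s : Multiset α} {b c : α} :
    s.fold max b ≤ c ↔ b ≤ c ∧ ∀ x ∈ s, x ≤ c := by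
  induction s using Multiset.induction_on with
  | empty => simp
  | cons a s ih =>
    simp only [Multiset.fold_cons_left, max_le_iff, ih, Multiset.forall_mem_cons]
    tauto

theorem Metric.hausdorffEDist_ne_top_of_subset_of_finite_diff {X : Type*} [PseudoMetricSpace X]
    {s t : Set X} (hst : s ⊆ t) (hs : s.Nonempty) (hfin : (t \ s).Finite) :
    hausdorffEDist s t ≠ ⊤ := by
  set r := hfin.toFinset.sup fun x => infEDist x s
  have hr : r ≠ ⊤ := by
    rw [← lt_top_iff_ne_top, Finset.sup_lt_iff (by simp)]
    exact fun x _ => (infEDist_ne_top hs).lt_top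
  refine ne_top_of_le_ne_top hr (hausdorffEDist_le_of_infEDist ?_ ?_)
  · intro x hx
    simp [infEDist_zero_of_mem (hst hx)]
  · intro x hx
    by_cases hxs : x ∈ s
    · simp [infEDist_zero_of_mem hxs]
    · exact Finset.le_sup (f := fun x => infEDist x s) (by simp [hx, hxs])

theorem exists_ne_dist_le_two_mul_of_card_lt {ι X : Type*} [PseudoMetricSpace X]
    {s : Finset ι} {T : Finset X} {f : ι → X} {c : ℝ} (hcard : T.card < s.card)
    (hnear : ∀ k ∈ s, ∃ t ∈ T, dist (f k) t ≤ c) :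
    ∃ j ∈ s, ∃ k ∈ s, j ≠ k ∧ dist (f j) (f k) ≤ 2 * c := by
  obtain ⟨k₀, -⟩ := Finset.card_pos.mp (Nat.zero_lt_of_lt hcard)
  have : Nonempty X := ⟨f k₀⟩
  choose! g hgT hg using hnear
  obtain ⟨j, hj, k, hk, hjk, hgjk⟩ := Finset.exists_ne_map_eq_of_card_lt_of_maps_to hcard hgT
  refine ⟨j, hj, k, hk, hjk, ?_⟩
  have hk' := hg k hk
  rw [← hgjk] at hk'
  linarith [hg j hj, dist_triangle_right (f j) (f k) (g j)]

theorem PD.finite_flat (A : PD) : A.flat.Finite :=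
  A.pts.toFinset.finite_toSet.subset fun _ h => Multiset.mem_toFinset.mpr h

namespace PDMatching

variable {A B : PD} (M : PDMatching A B)

theorem cost_le_iff {c : ℝ} :
    M.cost ≤ c ↔ 0 ≤ c ∧ (∀ pq ∈ M.pairs, dist pq.1 pq.2 ≤ c) ∧
      (∀ a ∈ A.pts - M.pairs.map Prod.fst, infDist a diag ≤ c) ∧
      ∀ b ∈ B.pts - M.pairs.map Prod.snd, infDist b diag ≤ c := by
  simp only [cost, Multiset.fold_max_le_iff, Multiset.mem_add, Multiset.mem_map, or_imp,
    forall_and, forall_exists_index, and_imp, forall_apply_eq_imp_iff₂]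

theorem cost_nonneg : 0 ≤ M.cost :=
  ((M.cost_le_iff).mp le_rfl).1

theorem dist_le_cost {pq : (ℝ × ℝ) × (ℝ × ℝ)} (h : pq ∈ M.pairs) : dist pq.1 pq.2 ≤ M.cost :=
  ((M.cost_le_iff).mp le_rfl).2.1 pq h

theorem infDist_diag_le_cost_of_unmatched {a : ℝ × ℝ} (h : a ∈ A.pts - M.pairs.map Prod.fst) :
    infDist a diag ≤ M.cost :=
  ((M.cost_le_iff).mp le_rfl).2.2.1 a h

theorem exists_dist_le_cost_of_cost_lt {a : ℝ × ℝ} (ha : a ∈ A.pts)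
    (h : M.cost < infDist a diag) : ∃ b ∈ B.pts, dist a b ≤ M.cost := by
  by_cases hm : a ∈ M.pairs.map Prod.fst
  · obtain ⟨pq, hpq, rfl⟩ := Multiset.mem_map.mp hm
    exact ⟨pq.2, Multiset.mem_of_le M.subB (Multiset.mem_map_of_mem _ hpq), M.dist_le_cost hpq⟩
  · have hunmatched : a ∈ A.pts - M.pairs.map Prod.fst := by
      rw [Multiset.mem_sub, Multiset.count_eq_zero.mpr hm]
      exact Multiset.count_pos.mpr ha
    exact absurd (M.infDist_diag_le_cost_of_unmatched hunmatched) h.not_ge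

end PDMatching

theorem bottleneckDist_le_cost {A B : PD} (M : PDMatching A B) : bottleneckDist A B ≤ M.cost :=
  csInf_le ⟨0, by rintro _ ⟨M', rfl⟩; exact M'.cost_nonneg⟩ ⟨M, rfl⟩

theorem le_bottleneckDist {A B : PD} {c : ℝ} (h : ∀ M : PDMatching A B, c ≤ M.cost) :
    c ≤ bottleneckDist A B :=
  le_csInf ⟨_, ⟨0, by simp, by simp⟩, rfl⟩ (by rintro _ ⟨M, rfl⟩; exact h M)

noncomputable def naturalReweightingMatching (B : PD) (NN : ℝ × ℝ → ℝ × ℝ) :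
    PDMatching B (naturalReweighting B NN) where
  pairs := (B.pts.filter fun b => (NN b).1 < (NN b).2).map fun b => (b, NN b)
  subA := by simp [Multiset.map_map]
  subB := by simp [Multiset.map_map, naturalReweighting, Multiset.filter_map]

theorem bottleneckDist_naturalReweighting_le {B : PD} {NN : ℝ × ℝ → ℝ × ℝ} {c : ℝ}
    (hc : 0 ≤ c) (hNN : ∀ b ∈ B.pts, (NN b).1 ≤ (NN b).2)
    (hdist : ∀ b ∈ B.pts, dist b (NN b) ≤ c) :
    bottleneckDist B (naturalReweighting B NN) ≤ c := by
  refine (bottleneckDist_le_cost (naturalReweightingMatching B NN)).trans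
    ((PDMatching.cost_le_iff _).mpr ⟨hc, ?_, ?_, ?_⟩)
  · simp only [naturalReweightingMatching, Multiset.mem_map, Multiset.mem_filter]
    rintro _ ⟨b, ⟨hb, -⟩, rfl⟩
    exact hdist b hb
  · intro b hb
    simp only [naturalReweightingMatching, Multiset.map_map, Function.comp_def,
      Multiset.map_id', Multiset.sub_filter_eq_filter_not, Multiset.mem_filter] at hb
    have hdiag : NN b ∈ diag := (hNN b hb.1).eq_of_not_lt hb.2
    exact (infDist_le_dist_of_mem hdiag).trans (hdist b hb.1)
  · simp [naturalReweightingMatching, naturalReweighting, Multiset.map_map, Multiset.filter_map]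

theorem isNearest.dist_eq_infDist {S : Set (ℝ × ℝ)} {b q : ℝ × ℝ} (h : isNearest S b q) :
    dist b q = infDist b S :=
  le_antisymm ((le_infDist ⟨q, h.1⟩).mpr h.2) (infDist_le_dist_of_mem h.1)

theorem prefixSet_mono {n : ℕ} (p : Fin n → ℝ × ℝ) {k i : ℕ} (h : k ≤ i) :
    prefixSet p k ⊆ prefixSet p i := by
  rintro _ ⟨j, hj, rfl⟩
  exact ⟨j, hj.trans_le h, rfl⟩

theorem prefixSet_eq_range {n : ℕ} (p : Fin n → ℝ × ℝ) {i : ℕ} (h : n ≤ i) :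
    prefixSet p i = Set.range p := by
  ext x
  exact ⟨fun ⟨j, _, hj⟩ => ⟨j, hj⟩, fun ⟨j, hj⟩ => ⟨j, j.isLt.trans_le h, hj⟩⟩

namespace GreedySketch

variable {D : PD} {n : ℕ} (G : GreedySketch D n)

theorem prefixSet_subset_flat (i : ℕ) : prefixSet G.p i ⊆ D.flat := by
  rintro _ ⟨j, -, rfl⟩
  exact G.range_eq ▸ Set.mem_range_self j

theorem infDist_le_eps (i : ℕ) {x : ℝ × ℝ} (hx : x ∈ D.flat ∪ diag) :
    infDist x (prefixSet G.p i ∪ diag) ≤ G.eps i := by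
  have hsub : prefixSet G.p i ∪ diag ⊆ D.flat ∪ diag :=
    Set.union_subset_union_left _ (G.prefixSet_subset_flat i)
  have hfin : ((D.flat ∪ diag) \ (prefixSet G.p i ∪ diag)).Finite :=
    D.finite_flat.subset fun y hy => hy.1.resolve_right fun h => hy.2 (.inr h)
  rw [eps, hausdorffDist_comm]
  refine infDist_le_hausdorffDist_of_mem hx ?_
  rw [hausdorffEDist_comm]
  exact hausdorffEDist_ne_top_of_subset_of_finite_diff hsub ⟨(0, 0), .inr rfl⟩ hfin

theorem eps_anti : Antitone G.eps := by
  intro k i hki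
  refine hausdorffDist_le_of_infDist hausdorffDist_nonneg (fun x hx => ?_) (fun x hx => ?_)
  · rw [infDist_zero_of_mem (Set.union_subset_union_left _ (G.prefixSet_subset_flat i) hx)]
    exact hausdorffDist_nonneg
  · refine (infDist_le_infDist_of_subset ?_ ⟨(0, 0), .inr rfl⟩).trans (G.infDist_le_eps k hx)
    exact Set.union_subset_union_left _ (prefixSet_mono _ hki)

theorem eps_eq_zero {i : ℕ} (hi : n ≤ i) : G.eps i = 0 := by
  rw [eps, prefixSet_eq_range _ hi, G.range_eq, hausdorffDist_self_zero]

theorem dist_NN_le_eps {i : ℕ} (hi : i ≤ n) {b : ℝ × ℝ} (hb : b ∈ D.pts) :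
    dist b (G.NN i b) ≤ G.eps i :=
  (G.NN_nearest i hi b hb).dist_eq_infDist ▸ G.infDist_le_eps i (.inl hb)

theorem NN_fst_le_snd {i : ℕ} (hi : i ≤ n) {b : ℝ × ℝ} (hb : b ∈ D.pts) :
    (G.NN i b).1 ≤ (G.NN i b).2 := by
  rcases (G.NN_nearest i hi b hb).1 with h | h
  · exact (D.above _ (G.prefixSet_subset_flat i h)).le
  · exact h.le

theorem p_mem_pts (k : Fin n) : G.p k ∈ D.pts :=
  show G.p k ∈ D.flat from G.range_eq ▸ Set.mem_range_self k

theorem eps_le_infDist_prefixSet {i : ℕ} (k : Fin n) (hk : (k : ℕ) ≤ i) :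
    G.eps i ≤ infDist (G.p k) (prefixSet G.p k ∪ diag) :=
  (G.eps_anti hk).trans (G.greedy k).ge

theorem eps_le_infDist_diag {i : ℕ} (k : Fin n) (hk : (k : ℕ) ≤ i) :
    G.eps i ≤ infDist (G.p k) diag :=
  (G.eps_le_infDist_prefixSet k hk).trans
    (infDist_le_infDist_of_subset Set.subset_union_right ⟨(0, 0), rfl⟩)

theorem eps_le_dist {i : ℕ} {j k : Fin n} (hjk : j ≠ k) (hj : (j : ℕ) ≤ i) (hk : (k : ℕ) ≤ i) :
    G.eps i ≤ dist (G.p j) (G.p k) := by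
  rcases hjk.lt_or_gt with h | h
  · rw [dist_comm]
    exact (G.eps_le_infDist_prefixSet k hk).trans (infDist_le_dist_of_mem (.inl ⟨j, h, rfl⟩))
  · exact (G.eps_le_infDist_prefixSet j hj).trans (infDist_le_dist_of_mem (.inl ⟨k, h, rfl⟩))

theorem bottleneckDist_approx_le_eps {i : ℕ} (hi : i ≤ n) :
    bottleneckDist D (G.approx i) ≤ G.eps i :=
  bottleneckDist_naturalReweighting_le hausdorffDist_nonneg (fun _ => G.NN_fst_le_snd hi)
    (fun _ => G.dist_NN_le_eps hi)

theorem eps_le_two_mul_cost {i : ℕ} (hi : i ≤ n) {E : PD} (hE : E.pts.toFinset.card ≤ i)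
    (M : PDMatching D E) : G.eps i ≤ 2 * M.cost := by
  rcases hi.eq_or_lt with rfl | hin
  · rw [G.eps_eq_zero le_rfl]
    linarith [M.cost_nonneg]
  by_contra! hlt
  set last : Fin n := ⟨i, hin⟩
  have hle : ∀ k ∈ Finset.Iic last, (k : ℕ) ≤ i := fun k hk => (Finset.mem_Iic.mp hk : k ≤ last)
  have hnear : ∀ k ∈ Finset.Iic last, ∃ e ∈ E.pts.toFinset, dist (G.p k) e ≤ M.cost := by
    intro k hk
    obtain ⟨e, he, hdist⟩ := M.exists_dist_le_cost_of_cost_lt (G.p_mem_pts k)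
      (by linarith [G.eps_le_infDist_diag k (hle k hk), M.cost_nonneg])
    exact ⟨e, Multiset.mem_toFinset.mpr he, hdist⟩
  obtain ⟨j, hj, k, hk, hjk, hdist⟩ := exists_ne_dist_le_two_mul_of_card_lt
    (by simpa [Fin.card_Iic] using hE.trans_lt i.lt_succ_self) hnear
  linarith [G.eps_le_dist hjk (hle j hj) (hle k hk)]

end GreedySketch

theorem greedy_sketch_two_approximation_general
    (D : PD) (n : ℕ) (G : GreedySketch D n)
    (i : ℕ) (hi : i ≤ n)
    (E : PD) (hE : E.pts.toFinset.card ≤ i) :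
    bottleneckDist D (G.approx i) ≤ 2 * bottleneckDist D E := by
  have hhalf : G.eps i / 2 ≤ bottleneckDist D E :=
    le_bottleneckDist fun M => by linarith [G.eps_le_two_mul_cost hi hE M]
  linarith [G.bottleneckDist_approx_le_eps hi]

/-- Each diagram `D_i` of a greedy PD sketch is a 2-approximation of the closest
persistence diagram to `D` with at most `i` distinct off-diagonal points. -/
theorem greedy_sketch_two_approximation
    (D : PD) (n : ℕ) (hn : D.pts.toFinset.card = n) (G : GreedySketch D n)
    (i : ℕ) (hi : i ≤ n)
    (E : PD) (hE : E.pts.toFinset.card ≤ i) :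
    bottleneckDist D (G.approx i) ≤ 2 * bottleneckDist D E :=
  greedy_sketch_two_approximation_general D n G i hi E hE
end

section
/- Let (D₀,…,D_n) be a greedy PD sketch of a persistence diagram D with insertion radii ε₀ ≥ ε₁ ≥ … ≥ ε_n = 0. Then for every i < n: (a) d_H(flat(D_i) ∪ Δ, flat(D_{i+1}) ∪ Δ) = ε_i, and (b) ε_i ≤ d_B(D_i, D_{i+1}) ≤ ε_i + ε_{i+1}. -/
open Metric

/-! ### Auxiliary lemmas -/

lemma diag_nonempty : diag.Nonempty := ⟨(0, 0), rfl⟩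

lemma le_infDist' {s : Set (ℝ × ℝ)} {x : ℝ × ℝ} {c : ℝ} (hs : s.Nonempty)
    (H : ∀ y ∈ s, c ≤ dist x y) : c ≤ infDist x s :=
  le_of_not_gt fun h => by
    obtain ⟨y, hy, hlt⟩ := (infDist_lt_iff hs).1 h
    exact absurd (H y hy) (not_le.2 hlt)

lemma fold_max_nonneg (s : Multiset ℝ) : 0 ≤ s.fold max 0 := by
  induction s using Multiset.induction with
  | empty => simp
  | cons a s ih => rw [Multiset.fold_cons_left]; exact le_trans ih (le_max_right _ _)

lemma le_fold_max {s : Multiset ℝ} {a : ℝ} (h : a ∈ s) : a ≤ s.fold max 0 := by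
  induction s using Multiset.induction with
  | empty => simp at h
  | cons b s ih =>
    rw [Multiset.fold_cons_left]
    rcases Multiset.mem_cons.1 h with h | h
    · exact h ▸ le_max_left _ _
    · exact le_trans (ih h) (le_max_right _ _)

lemma fold_max_le {s : Multiset ℝ} {c : ℝ} (hc : 0 ≤ c) (h : ∀ a ∈ s, a ≤ c) :
    s.fold max 0 ≤ c := by
  induction s using Multiset.induction with
  | empty => simpa
  | cons a s ih =>
    rw [Multiset.fold_cons_left]
    exact max_le (h a (Multiset.mem_cons_self _ _))
      (ih fun b hb => h b (Multiset.mem_cons_of_mem hb))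

lemma hd_diag_ne_top {A : Set (ℝ × ℝ)} (hA : A.Finite) :
    EMetric.hausdorffEdist (A ∪ diag) diag ≠ ⊤ := by
  classical
  set r : ENNReal := hA.toFinset.sup fun x => edist x (x.2, x.2) with hr
  have hrt : r < ⊤ := by
    rw [hr]
    apply Finset.sup_lt_iff (by simp) |>.2
    intro x _
    exact edist_lt_top x (x.2, x.2)
  refine ne_top_of_le_ne_top hrt.ne ?_
  apply EMetric.hausdorffEdist_le_of_mem_edist
  · rintro x (hx | hx)
    · exact ⟨(x.2, x.2), rfl,
        hr ▸ Finset.le_sup (f := fun x : ℝ × ℝ => edist x (x.2, x.2)) (hA.mem_toFinset.2 hx)⟩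
    · exact ⟨x, hx, by simp⟩
  · intro x hx
    exact ⟨x, Or.inr hx, by simp⟩

lemma hd_union_diag_ne_top {A B : Set (ℝ × ℝ)} (hA : A.Finite) (hB : B.Finite) :
    EMetric.hausdorffEdist (A ∪ diag) (B ∪ diag) ≠ ⊤ := by
  refine ne_top_of_le_ne_top ?_ (EMetric.hausdorffEdist_triangle (t := diag))
  exact ENNReal.add_ne_top.2 ⟨hd_diag_ne_top hA,
    by rw [EMetric.hausdorffEdist_comm]; exact hd_diag_ne_top hB⟩

lemma prefixSet_finite {n : ℕ} (p : Fin n → ℝ × ℝ) (i : ℕ) : (prefixSet p i).Finite :=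
  (Set.finite_range p).subset (by rintro x ⟨j, _, rfl⟩; exact ⟨j, rfl⟩)

lemma flat_finite (D : PD) : D.flat.Finite :=
  D.pts.toFinset.finite_toSet.subset fun x hx => Multiset.mem_toFinset.2 hx

lemma prefixSet_subset_succ {n : ℕ} (p : Fin n → ℝ × ℝ) (i : ℕ) :
    prefixSet p i ⊆ prefixSet p (i + 1) := by
  rintro x ⟨j, hj, rfl⟩
  exact ⟨j, Nat.lt_succ_of_lt hj, rfl⟩

lemma prefixSet_union_nonempty {n : ℕ} (p : Fin n → ℝ × ℝ) (i : ℕ) :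
    (prefixSet p i ∪ diag).Nonempty := ⟨(0, 0), Or.inr rfl⟩

section Sketch

variable {D : PD} {n : ℕ} (G : GreedySketch D n)

lemma mem_prefix_above {i : ℕ} {x : ℝ × ℝ} (hx : x ∈ prefixSet G.p i) : x.1 < x.2 := by
  obtain ⟨j, _, rfl⟩ := hx
  have : G.p j ∈ D.flat := G.range_eq ▸ Set.mem_range_self j
  exact D.above _ this

lemma NN_fix {i : ℕ} (hin : i ≤ n) {b : ℝ × ℝ} (hb : b ∈ D.pts)
    (hbS : b ∈ prefixSet G.p i ∪ diag) : G.NN i b = b := by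
  have hnear := G.NN_nearest i hin b hb
  have h0 : dist b (G.NN i b) ≤ 0 := by
    simpa using hnear.2 b hbS
  have : dist b (G.NN i b) = 0 := le_antisymm h0 dist_nonneg
  exact (eq_of_dist_eq_zero this).symm

lemma NN_mem_prefix_of_offdiag {i : ℕ} (hin : i ≤ n) {b : ℝ × ℝ} (hb : b ∈ D.pts)
    (hoff : (G.NN i b).1 < (G.NN i b).2) : G.NN i b ∈ prefixSet G.p i := by
  rcases (G.NN_nearest i hin b hb).1 with h | h
  · exact h
  · exact absurd hoff (by rw [h]; exact lt_irrefl _)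

lemma NN_mem_diag_of_not_offdiag {i : ℕ} (hin : i ≤ n) {b : ℝ × ℝ} (hb : b ∈ D.pts)
    (hoff : ¬ (G.NN i b).1 < (G.NN i b).2) : G.NN i b ∈ diag := by
  rcases (G.NN_nearest i hin b hb).1 with h | h
  · exact absurd (mem_prefix_above G h) hoff
  · exact h

lemma flat_approx {i : ℕ} (hin : i ≤ n) : (G.approx i).flat = prefixSet G.p i := by
  ext q
  constructor
  · intro hq
    obtain ⟨hm, habove⟩ := Multiset.mem_filter.mp hq
    obtain ⟨b, hb, rfl⟩ := Multiset.mem_map.mp hm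
    exact NN_mem_prefix_of_offdiag G hin hb habove
  · intro hx
    obtain ⟨j, hj, rfl⟩ := id hx
    have hD : G.p j ∈ D.flat := G.range_eq ▸ Set.mem_range_self j
    have hDp : G.p j ∈ D.pts := hD
    have hfix : G.NN i (G.p j) = G.p j := NN_fix G hin hDp (Or.inl hx)
    exact Multiset.mem_filter.mpr ⟨Multiset.mem_map.mpr ⟨G.p j, hDp, hfix⟩, D.above _ hDp⟩

lemma dist_NN_le_eps {i : ℕ} (hin : i ≤ n) {b : ℝ × ℝ} (hb : b ∈ D.pts) :
    dist b (G.NN i b) ≤ G.eps i := by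
  have hnear := G.NN_nearest i hin b hb
  have h1 : dist b (G.NN i b) ≤ infDist b (prefixSet G.p i ∪ diag) :=
    le_infDist' (prefixSet_union_nonempty G.p i) hnear.2
  have h2 : infDist b (prefixSet G.p i ∪ diag) ≤
      hausdorffDist (D.flat ∪ diag) (prefixSet G.p i ∪ diag) :=
    infDist_le_hausdorffDist_of_mem (Or.inl hb)
      (hd_union_diag_ne_top (flat_finite D) (prefixSet_finite G.p i))
  rw [hausdorffDist_comm] at h2
  exact h1.trans h2

lemma eps_nonneg (i : ℕ) : 0 ≤ G.eps i := hausdorffDist_nonneg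

end Sketch

lemma map_filter_sub {α β : Type*} (s : Multiset α) (p q : α → Prop)
    [DecidablePred p] [DecidablePred q] (f : α → β) [DecidableEq β] :
    (s.filter p).map f - (s.filter fun a => p a ∧ q a).map f =
      (s.filter fun a => p a ∧ ¬ q a).map f := by
  have hsplit : s.filter p =
      (s.filter fun a => p a ∧ q a) + s.filter fun a => p a ∧ ¬ q a := by
    rw [← Multiset.filter_add_not q (s.filter p), Multiset.filter_filter,
      Multiset.filter_filter]
    congr 1
    · exact Multiset.filter_congr fun a _ => by tauto
    · exact Multiset.filter_congr fun a _ => by tauto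
  rw [hsplit, Multiset.map_add, add_tsub_cancel_left]

/-- For consecutive diagrams of a greedy PD sketch:
(a) `d_H(flat D_i ∪ Δ, flat D_{i+1} ∪ Δ) = ε_i`, and
(b) `ε_i ≤ d_B(D_i, D_{i+1}) ≤ ε_i + ε_{i+1}`. -/
theorem greedy_sketch_consecutive_bounds
    (D : PD) (n : ℕ) (hn : D.pts.toFinset.card = n) (G : GreedySketch D n)
    (i : ℕ) (hi : i < n) :
    hausdorffDist ((G.approx i).flat ∪ diag) ((G.approx (i + 1)).flat ∪ diag) = G.eps i ∧
    G.eps i ≤ bottleneckDist (G.approx i) (G.approx (i + 1)) ∧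
    bottleneckDist (G.approx i) (G.approx (i + 1)) ≤ G.eps i + G.eps (i + 1) := by
  classical
  have hin : i ≤ n := hi.le
  have hin1 : i + 1 ≤ n := hi
  set pi : ℝ × ℝ := G.p ⟨i, hi⟩ with hpi
  have hpiD : pi ∈ D.pts := by
    have : pi ∈ D.flat := G.range_eq ▸ Set.mem_range_self _
    exact this
  have hpi_mem_succ : pi ∈ prefixSet G.p (i + 1) := ⟨⟨i, hi⟩, Nat.lt_succ_self i, rfl⟩
  have hgreedy : infDist pi (prefixSet G.p i ∪ diag) = G.eps i := G.greedy ⟨i, hi⟩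
  -- Part (a)
  have hA : hausdorffDist ((G.approx i).flat ∪ diag) ((G.approx (i + 1)).flat ∪ diag) =
      G.eps i := by
    rw [flat_approx G hin, flat_approx G hin1]
    have hfin : EMetric.hausdorffEdist (prefixSet G.p (i + 1) ∪ diag)
        (prefixSet G.p i ∪ diag) ≠ ⊤ :=
      hd_union_diag_ne_top (prefixSet_finite G.p (i + 1)) (prefixSet_finite G.p i)
    apply le_antisymm
    · apply hausdorffDist_le_of_infDist (eps_nonneg G i)
      · intro x hx
        have hx' : x ∈ prefixSet G.p (i + 1) ∪ diag := by
          rcases hx with hx | hx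
          · exact Or.inl (prefixSet_subset_succ G.p i hx)
          · exact Or.inr hx
        have h0 : infDist x (prefixSet G.p (i + 1) ∪ diag) = 0 := infDist_zero_of_mem hx'
        rw [h0]
        exact eps_nonneg G i
      · intro x hx
        rcases hx with hx | hx
        · obtain ⟨j, hj, rfl⟩ := hx
          rcases Nat.lt_succ_iff_lt_or_eq.mp hj with hj' | hj'
          · have h0 : infDist (G.p j) (prefixSet G.p i ∪ diag) = 0 :=
              infDist_zero_of_mem (Or.inl ⟨j, hj', rfl⟩)
            rw [h0]
            exact eps_nonneg G i
          · have hje : G.p j = pi := congrArg G.p (Fin.ext hj')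
            rw [hje, hgreedy]
        · have h0 : infDist x (prefixSet G.p i ∪ diag) = 0 :=
            infDist_zero_of_mem (Or.inr hx)
          rw [h0]
          exact eps_nonneg G i
    · calc G.eps i = infDist pi (prefixSet G.p i ∪ diag) := hgreedy.symm
        _ ≤ hausdorffDist (prefixSet G.p (i + 1) ∪ diag) (prefixSet G.p i ∪ diag) :=
            infDist_le_hausdorffDist_of_mem (Or.inl hpi_mem_succ) hfin
        _ = hausdorffDist (prefixSet G.p i ∪ diag) (prefixSet G.p (i + 1) ∪ diag) :=
            hausdorffDist_comm
  refine ⟨hA, ?_, ?_⟩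
  -- Part (b), lower bound
  · have hMex : {c | ∃ M : PDMatching (G.approx i) (G.approx (i + 1)), M.cost = c}.Nonempty :=
      ⟨PDMatching.cost ⟨0, by simp, by simp⟩, ⟨0, by simp, by simp⟩, rfl⟩
    apply le_csInf hMex
    rintro c ⟨M, rfl⟩
    have hfix : G.NN (i + 1) pi = pi := NN_fix G hin1 hpiD (Or.inl hpi_mem_succ)
    have hpiB : pi ∈ (G.approx (i + 1)).pts := by
      exact Multiset.mem_filter.mpr ⟨Multiset.mem_map.mpr ⟨pi, hpiD, hfix⟩, D.above _ hpiD⟩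
    by_cases hms : pi ∈ M.pairs.map Prod.snd
    · obtain ⟨pq, hpq, hsnd⟩ := Multiset.mem_map.mp hms
      have hfst : pq.1 ∈ (G.approx i).pts :=
        Multiset.mem_of_le M.subA (Multiset.mem_map_of_mem _ hpq)
      obtain ⟨hm1, hab1⟩ := Multiset.mem_filter.mp hfst
      obtain ⟨b, hb, hbeq⟩ := Multiset.mem_map.mp hm1
      have hfst_prefix : pq.1 ∈ prefixSet G.p i := by
        rw [← hbeq]
        exact NN_mem_prefix_of_offdiag G hin hb (hbeq ▸ hab1)
      have helt : dist pq.1 pq.2 ∈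
          ((M.pairs.map fun pq => dist pq.1 pq.2) +
            ((((G.approx i).pts - M.pairs.map Prod.fst) +
              ((G.approx (i + 1)).pts - M.pairs.map Prod.snd)).map
              fun q => infDist q diag)) :=
        Multiset.mem_add.mpr (Or.inl (Multiset.mem_map.mpr ⟨pq, hpq, rfl⟩))
      have hge : G.eps i ≤ dist pq.1 pq.2 := by
        rw [← hgreedy, ← hsnd]
        rw [dist_comm]
        exact infDist_le_dist_of_mem (Or.inl hfst_prefix)
      exact hge.trans (le_fold_max helt)
    · have hmem : pi ∈ (G.approx (i + 1)).pts - M.pairs.map Prod.snd := by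
        rw [← Multiset.count_pos, Multiset.count_sub,
          Multiset.count_eq_zero_of_notMem hms]
        simpa [Multiset.count_pos] using hpiB
      have helt : infDist pi diag ∈
          ((M.pairs.map fun pq => dist pq.1 pq.2) +
            ((((G.approx i).pts - M.pairs.map Prod.fst) +
              ((G.approx (i + 1)).pts - M.pairs.map Prod.snd)).map
              fun q => infDist q diag)) :=
        Multiset.mem_add.mpr (Or.inr (Multiset.mem_map.mpr
          ⟨pi, Multiset.mem_add.mpr (Or.inr hmem), rfl⟩))
      have hge : G.eps i ≤ infDist pi diag := by
        rw [← hgreedy]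
        exact infDist_le_infDist_of_subset Set.subset_union_right diag_nonempty
      exact hge.trans (le_fold_max helt)
  -- Part (b), upper bound
  · set P1 : ℝ × ℝ → Prop := fun b => (G.NN i b).1 < (G.NN i b).2 with hP1
    set P2 : ℝ × ℝ → Prop := fun b => (G.NN (i + 1) b).1 < (G.NN (i + 1) b).2 with hP2
    set f : ℝ × ℝ → (ℝ × ℝ) × (ℝ × ℝ) := fun b => (G.NN i b, G.NN (i + 1) b) with hf
    have hAeq : (G.approx i).pts = (D.pts.filter P1).map (G.NN i) := by
      show (D.pts.map (G.NN i)).filter (fun q => q.1 < q.2) = _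
      rw [Multiset.filter_map]
      rfl
    have hBeq : (G.approx (i + 1)).pts = (D.pts.filter P2).map (G.NN (i + 1)) := by
      show (D.pts.map (G.NN (i + 1))).filter (fun q => q.1 < q.2) = _
      rw [Multiset.filter_map]
      rfl
    have hfst : ((D.pts.filter fun b => P1 b ∧ P2 b).map f).map Prod.fst =
        (D.pts.filter fun b => P1 b ∧ P2 b).map (G.NN i) := by
      rw [Multiset.map_map]; rfl
    have hsnd : ((D.pts.filter fun b => P1 b ∧ P2 b).map f).map Prod.snd =
        (D.pts.filter fun b => P1 b ∧ P2 b).map (G.NN (i + 1)) := by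
      rw [Multiset.map_map]; rfl
    have hsubA : ((D.pts.filter fun b => P1 b ∧ P2 b).map f).map Prod.fst ≤
        (G.approx i).pts := by
      rw [hfst, hAeq]
      exact Multiset.map_le_map (Multiset.monotone_filter_right _ fun b hb => hb.1)
    have hsubB : ((D.pts.filter fun b => P1 b ∧ P2 b).map f).map Prod.snd ≤
        (G.approx (i + 1)).pts := by
      rw [hsnd, hBeq]
      exact Multiset.map_le_map (Multiset.monotone_filter_right _ fun b hb => hb.2)
    set M : PDMatching (G.approx i) (G.approx (i + 1)) :=
      ⟨(D.pts.filter fun b => P1 b ∧ P2 b).map f, hsubA, hsubB⟩ with hM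
    have hsubeqA : (G.approx i).pts - M.pairs.map Prod.fst =
        (D.pts.filter fun b => P1 b ∧ ¬ P2 b).map (G.NN i) := by
      show (G.approx i).pts - ((D.pts.filter fun b => P1 b ∧ P2 b).map f).map Prod.fst = _
      rw [hfst, hAeq]
      exact map_filter_sub D.pts P1 P2 (G.NN i)
    have hsubeqB : (G.approx (i + 1)).pts - M.pairs.map Prod.snd =
        (D.pts.filter fun b => P2 b ∧ ¬ P1 b).map (G.NN (i + 1)) := by
      show (G.approx (i + 1)).pts -
        ((D.pts.filter fun b => P1 b ∧ P2 b).map f).map Prod.snd = _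
      rw [hsnd, hBeq,
        show (D.pts.filter fun b => P1 b ∧ P2 b) = D.pts.filter fun b => P2 b ∧ P1 b from
          Multiset.filter_congr fun a _ => by tauto]
      exact map_filter_sub D.pts P2 P1 (G.NN (i + 1))
    have hcost : M.cost ≤ G.eps i + G.eps (i + 1) := by
      apply fold_max_le (add_nonneg (eps_nonneg G i) (eps_nonneg G (i + 1)))
      intro a ha
      rcases Multiset.mem_add.mp ha with ha | ha
      · obtain ⟨pq, hpq, rfl⟩ := Multiset.mem_map.mp ha
        obtain ⟨b, hb, rfl⟩ := Multiset.mem_map.mp hpq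
        have hbD : b ∈ D.pts := Multiset.mem_of_mem_filter hb
        calc dist (f b).1 (f b).2 ≤ dist (f b).1 b + dist b (f b).2 := dist_triangle _ _ _
          _ = dist b (G.NN i b) + dist b (G.NN (i + 1) b) := by
              rw [dist_comm]
          _ ≤ G.eps i + G.eps (i + 1) :=
              add_le_add (dist_NN_le_eps G hin hbD) (dist_NN_le_eps G hin1 hbD)
      · obtain ⟨q, hq, rfl⟩ := Multiset.mem_map.mp ha
        rcases Multiset.mem_add.mp hq with hq | hq
        · rw [hsubeqA] at hq
          obtain ⟨b, hb, rfl⟩ := Multiset.mem_map.mp hq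
          have hbD : b ∈ D.pts := Multiset.mem_of_mem_filter hb
          have hbP : P1 b ∧ ¬ P2 b := (Multiset.mem_filter.mp hb).2
          have hdiag : G.NN (i + 1) b ∈ diag :=
            NN_mem_diag_of_not_offdiag G hin1 hbD hbP.2
          calc infDist (G.NN i b) diag ≤ dist (G.NN i b) (G.NN (i + 1) b) :=
                infDist_le_dist_of_mem hdiag
            _ ≤ dist (G.NN i b) b + dist b (G.NN (i + 1) b) := dist_triangle _ _ _
            _ = dist b (G.NN i b) + dist b (G.NN (i + 1) b) := by rw [dist_comm]
            _ ≤ G.eps i + G.eps (i + 1) :=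
                add_le_add (dist_NN_le_eps G hin hbD) (dist_NN_le_eps G hin1 hbD)
        · rw [hsubeqB] at hq
          obtain ⟨b, hb, rfl⟩ := Multiset.mem_map.mp hq
          have hbD : b ∈ D.pts := Multiset.mem_of_mem_filter hb
          have hbP : P2 b ∧ ¬ P1 b := (Multiset.mem_filter.mp hb).2
          have hdiag : G.NN i b ∈ diag :=
            NN_mem_diag_of_not_offdiag G hin hbD hbP.2
          calc infDist (G.NN (i + 1) b) diag ≤ dist (G.NN (i + 1) b) (G.NN i b) :=
                infDist_le_dist_of_mem hdiag
            _ ≤ dist (G.NN (i + 1) b) b + dist b (G.NN i b) := dist_triangle _ _ _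
            _ = dist b (G.NN i b) + dist b (G.NN (i + 1) b) := by
                rw [dist_comm]; ring
            _ ≤ G.eps i + G.eps (i + 1) :=
                add_le_add (dist_NN_le_eps G hin hbD) (dist_NN_le_eps G hin1 hbD)
    have hbdd : BddBelow {c | ∃ M : PDMatching (G.approx i) (G.approx (i + 1)), M.cost = c} :=
      ⟨0, by rintro c ⟨M', rfl⟩; exact fold_max_nonneg _⟩
    exact (csInf_le hbdd ⟨M, rfl⟩).trans hcost
end

section
/- Let R, B ⊆ ℝ² be nonempty compact sets, let λ > 0 and γ ≥ 1, and let R_λ ⊆ R and B_λ ⊆ B be nonempty subsets with d_H(R, R_λ) ≤ λ and d_H(B, B_λ) ≤ λ. If the bipartite γλ-neighborhood graph BiNbrhd(R_λ, B_λ, γλ) has an isolated vertex, then d_H(R, B) ≥ λ(γ − 1). -/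
open Metric

lemma aux_side (R B : Set (ℝ × ℝ)) (hRc : IsCompact R) (hBc : IsCompact B)
    (hBne : B.Nonempty) (hRne : R.Nonempty)
    (lam γ : ℝ) (hlam : 0 < lam)
    (Rl Bl : Set (ℝ × ℝ)) (hRl : Rl ⊆ R) (hBl : Bl ⊆ B)
    (hBlne : Bl.Nonempty)
    (hBH : hausdorffDist B Bl ≤ lam)
    (x : ℝ × ℝ) (hx : x ∈ Rl) (hfar : ∀ y ∈ Bl, γ * lam < dist x y) :
    lam * (γ - 1) ≤ hausdorffDist R B := by
  have hEB : EMetric.hausdorffEdist B Bl ≠ ⊤ :=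
    hausdorffEdist_ne_top_of_nonempty_of_bounded hBne hBlne hBc.isBounded
      (hBc.isBounded.subset hBl)
  have hERB : EMetric.hausdorffEdist R B ≠ ⊤ :=
    hausdorffEdist_ne_top_of_nonempty_of_bounded hRne hBne hRc.isBounded hBc.isBounded
  have h1 : γ * lam ≤ infDist x Bl := by
    by_contra h
    obtain ⟨y, hy, hlt⟩ := (infDist_lt_iff hBlne).1 (lt_of_not_ge h)
    exact absurd hlt (not_lt.2 (hfar y hy).le)
  have h2 : infDist x Bl ≤ infDist x B + hausdorffDist B Bl :=
    infDist_le_infDist_add_hausdorffDist hEB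
  have h3 : infDist x B ≤ hausdorffDist R B :=
    infDist_le_hausdorffDist_of_mem (hRl hx) hERB
  nlinarith

/-- If the bipartite `γλ`-neighborhood graph between `λ`-approximations `R_λ` of `R`
and `B_λ` of `B` has an isolated vertex, then `d_H(R, B) ≥ λ(γ − 1)`.
(An isolated vertex is a point of one side at distance greater than `γλ` from
every point of the other side.) -/
theorem isolated_vertex_hausdorff_bound
    (R B : Set (ℝ × ℝ)) (hRne : R.Nonempty) (hBne : B.Nonempty)
    (hRc : IsCompact R) (hBc : IsCompact B)
    (lam γ : ℝ) (hlam : 0 < lam) (hγ : 1 ≤ γ)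
    (Rl Bl : Set (ℝ × ℝ)) (hRl : Rl ⊆ R) (hBl : Bl ⊆ B)
    (hRlne : Rl.Nonempty) (hBlne : Bl.Nonempty)
    (hRH : hausdorffDist R Rl ≤ lam) (hBH : hausdorffDist B Bl ≤ lam)
    (hiso : (∃ x ∈ Rl, ∀ y ∈ Bl, γ * lam < dist x y) ∨
            (∃ y ∈ Bl, ∀ x ∈ Rl, γ * lam < dist x y)) :
    lam * (γ - 1) ≤ hausdorffDist R B := by
  rcases hiso with ⟨x, hx, hfar⟩ | ⟨y, hy, hfar⟩
  · exact aux_side R B hRc hBc hBne hRne lam γ hlam Rl Bl hRl hBl hBlne hBH x hx hfar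
  · rw [hausdorffDist_comm]
    exact aux_side B R hBc hRc hRne hBne lam γ hlam Bl Rl hBl hRl hRlne hRH y hy
      (fun x hx => by rw [dist_comm]; exact hfar x hx)
end
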